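/- In the coin dropping game, if during a super-iteration with current set S_v the node v satisfies |D(ℓ_β, v)| ≤ x², ℓ_β(v) ≤ log_{β+1} x, and σ_{S_v,β}(v) > ℓ_β(v), then there exists a path v = w_0, w_1, ..., w_k in G with each w_i a neighbor of w_{i−1}, w_i ∈ D(ℓ_β, w_{i−1}), σ_{S_v,β}(w_i) > ℓ_β(w_i) for all i < k, k ≤ log_{β+1} x, and w_k ∉ S_v; consequently a new node of D(ℓ_β, v) \ S_v is discovered. -/

import Mathlib

open Classical

variable {V : Type*}

/-- `G` has arboricity at most `a`: every subgraph `H` with at least `2` vertices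
satisfies `⌈|E(H)|/(|V(H)|-1)⌉ ≤ a`, i.e. `|E(H)| ≤ a * (|V(H)| - 1)`. -/
def HasArboricity (G : SimpleGraph V) (a : ℕ) : Prop :=
  ∀ H : G.Subgraph, 2 ≤ H.verts.ncard → H.edgeSet.ncard ≤ a * (H.verts.ncard - 1)

/-- Vertices assigned a layer `≤ i` in the iterative construction of the
`S`-induced `β`-partition. -/
noncomputable def assignedUpTo (G : SimpleGraph V) (S : Set V) (β : ℕ) : ℕ → Set V
  | 0 => {v | v ∈ S ∧ (G.neighborSet v).ncard ≤ β}
  | (i+1) => assignedUpTo G S β i ∪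
      {v | v ∈ S ∧ ((G.neighborSet v) \ assignedUpTo G S β i).ncard ≤ β}

/-- The `S`-induced `β`-partition `σ_{S,β} : V → ℕ∞`. -/
noncomputable def indSigma (G : SimpleGraph V) (S : Set V) (β : ℕ) (v : V) : ℕ∞ :=
  if _h : ∃ i, v ∈ assignedUpTo G S β i then (sInf {i | v ∈ assignedUpTo G S β i} : ℕ) else ⊤

/-- Auxiliary definition of the dependency graph, by fuel on the layer. -/
noncomputable def depAux (G : SimpleGraph V) (σ : V → ℕ∞) : ℕ → V → Set V
  | 0, v => if σ v = 0 then {v} else ∅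
  | (n+1), v => if σ v = ((n+1 : ℕ) : ℕ∞)
      then insert v (⋃ w ∈ {w | G.Adj v w ∧ σ w < σ v}, depAux G σ n w)
      else depAux G σ n v

/-- The dependency graph `D(σ, v)`. -/
noncomputable def depGraph (G : SimpleGraph V) (σ : V → ℕ∞) (v : V) : Set V :=
  depAux G σ (σ v).toNat v

/-- A partial `β`-partition: every node with finite layer has at most `β`
neighbors in equal or higher layers. -/
def IsPartialBetaPartition (G : SimpleGraph V) (β : ℕ) (lam : V → ℕ∞) : Prop :=
  ∀ v, lam v ≠ ⊤ → {w | G.Adj v w ∧ lam v ≤ lam w}.ncard ≤ β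

/-!
If `v ∈ S` and `σ_T(v) = m + 1 < σ_S(v)`, then `v` has at most `β` neighbours outside the first
`m` layers of `σ_T` but more than `β` outside the first `m` layers of `σ_S`, so some neighbour `w`
has `σ_T(w) ≤ m < σ_S(w)`; it lies in `D(σ_T, v)`. Repeating from `w` while `w ∈ S`, the layer
`σ_T` strictly decreases, so the walk leaves `S` after at most `σ_T(v)` steps.
-/

section Partition

variable (G : SimpleGraph V) (β : ℕ)

lemma assignedUpTo_mono (S : Set V) : Monotone (assignedUpTo G S β) :=
  monotone_nat_of_le_succ fun _ => Set.subset_union_left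

lemma indSigma_le_coe_iff (S : Set V) (v : V) (i : ℕ) :
    indSigma G S β v ≤ i ↔ v ∈ assignedUpTo G S β i := by
  unfold indSigma
  split_ifs with h
  · rw [Nat.cast_le]
    exact ⟨fun hle => assignedUpTo_mono G β S hle (Nat.sInf_mem h), fun hi => Nat.sInf_le hi⟩
  · simpa using fun hi => h ⟨i, hi⟩

variable [G.LocallyFinite]

lemma exists_adj_mem_assignedUpTo_not_mem {S T : Set V} {v : V} {m : ℕ} (hv : v ∈ S)
    (hT : v ∈ assignedUpTo G T β (m + 1)) (hT' : v ∉ assignedUpTo G T β m)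
    (hS : v ∉ assignedUpTo G S β (m + 1)) :
    ∃ w, G.Adj v w ∧ w ∈ assignedUpTo G T β m ∧ w ∉ assignedUpTo G S β m := by
  have hcardT : (G.neighborSet v \ assignedUpTo G T β m).ncard ≤ β := (hT.resolve_left hT').2
  have hcardS : β < (G.neighborSet v \ assignedUpTo G S β m).ncard :=
    not_le.1 fun hle => hS (Or.inr ⟨hv, hle⟩)
  have hnsub : ¬ G.neighborSet v \ assignedUpTo G S β m ⊆ G.neighborSet v \ assignedUpTo G T β m :=
    fun hsub => ((Set.ncard_le_ncard hsub (Set.toFinite _)).trans hcardT).not_gt hcardS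
  obtain ⟨w, ⟨hadj, hwS⟩, hwT⟩ := Set.not_subset.1 hnsub
  exact ⟨w, hadj, not_not.1 fun hw => hwT ⟨hadj, hw⟩, hwS⟩

lemma exists_adj_indSigma_lt {S T : Set V} {v : V} (hv : v ∈ S)
    (h : indSigma G T β v < indSigma G S β v) :
    ∃ w, G.Adj v w ∧ indSigma G T β w < indSigma G T β v ∧
      indSigma G T β w < indSigma G S β w := by
  obtain ⟨n, hn⟩ := ENat.ne_top_iff_exists.1 h.ne_top
  have hvT : v ∈ assignedUpTo G T β n := (indSigma_le_coe_iff G β T v n).1 hn.ge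
  have hvS : v ∉ assignedUpTo G S β n := fun hvS =>
    h.not_ge (hn ▸ (indSigma_le_coe_iff G β S v n).2 hvS)
  cases n with
  | zero => exact absurd ⟨hv, hvT.2⟩ hvS
  | succ m =>
    have hvT' : v ∉ assignedUpTo G T β m := fun hvT' => by
      have := (indSigma_le_coe_iff G β T v m).2 hvT'
      rw [← hn, Nat.cast_le] at this
      omega
    obtain ⟨w, hadj, hwT, hwS⟩ := exists_adj_mem_assignedUpTo_not_mem G β hv hvT hvT' hvS
    have hwT' := (indSigma_le_coe_iff G β T w m).2 hwT
    have hwS' : (m : ℕ∞) < indSigma G S β w :=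
      not_le.1 fun hle => hwS ((indSigma_le_coe_iff G β S w m).1 hle)
    exact ⟨w, hadj, hwT'.trans_lt (hn ▸ by exact_mod_cast m.lt_succ_self), hwT'.trans_lt hwS'⟩

end Partition

section DependencyGraph

variable (G : SimpleGraph V) (σ : V → ℕ∞)

lemma depAux_eq_depGraph : ∀ (n : ℕ) (w : V), σ w ≤ n → depAux G σ n w = depGraph G σ w
  | 0, w, h => by
    have h0 : σ w = 0 := nonpos_iff_eq_zero.1 (by simpa using h)
    rw [depGraph, h0]
    rfl
  | n + 1, w, h => by
    rcases h.lt_or_eq with hlt | heq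
    · rw [depAux, if_neg hlt.ne, depAux_eq_depGraph n w]
      rwa [Nat.cast_succ, ENat.lt_add_one_iff (ENat.natCast_ne_top n)] at hlt
    · rw [depGraph, heq, ENat.toNat_natCast]

lemma depGraph_of_eq_zero {v : V} (h : σ v = 0) : depGraph G σ v = {v} := by
  rw [depGraph, h]
  exact if_pos h

lemma depGraph_of_eq_succ {v : V} {n : ℕ} (h : σ v = (n + 1 : ℕ)) :
    depGraph G σ v = insert v (⋃ w ∈ {w | G.Adj v w ∧ σ w < σ v}, depGraph G σ w) := by
  conv_lhs => rw [depGraph, h, ENat.toNat_natCast, depAux, if_pos h]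
  refine congrArg (insert v) (Set.iUnion₂_congr fun w hw => depAux_eq_depGraph G σ n w ?_)
  have hlt := hw.2
  rwa [h, Nat.cast_succ, ENat.lt_add_one_iff (ENat.natCast_ne_top n)] at hlt

lemma mem_depGraph_self {v : V} (h : σ v ≠ ⊤) : v ∈ depGraph G σ v := by
  obtain ⟨n, hn⟩ := ENat.ne_top_iff_exists.1 h
  cases n with
  | zero => simp [depGraph_of_eq_zero G σ hn.symm]
  | succ n => simp [depGraph_of_eq_succ G σ hn.symm]

lemma depGraph_subset_of_adj {v w : V} (hadj : G.Adj v w) (hlt : σ w < σ v) (hv : σ v ≠ ⊤) :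
    depGraph G σ w ⊆ depGraph G σ v := by
  obtain ⟨n, hn⟩ := ENat.ne_top_iff_exists.1 hv
  cases n with
  | zero => simp [← hn] at hlt
  | succ n =>
    rw [depGraph_of_eq_succ G σ hn.symm]
    have hw : w ∈ {u | G.Adj v u ∧ σ u < σ v} := ⟨hadj, hlt⟩
    exact (Set.subset_biUnion_of_mem (u := depGraph G σ) hw).trans (Set.subset_insert _ _)

end DependencyGraph

lemma Fin.rel_cons_castSucc_cons_succ {α : Type*} {R : α → α → Prop} {k : ℕ} {a : α}
    {p : Fin (k + 1) → α} (h₀ : R a (p 0)) (h : ∀ i : Fin k, R (p i.castSucc) (p i.succ))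
    (i : Fin (k + 1)) :
    R ((Fin.cons a p : Fin (k + 2) → α) i.castSucc) ((Fin.cons a p : Fin (k + 2) → α) i.succ) := by
  cases i using Fin.cases with
  | zero => simpa using h₀
  | succ j => simpa [← Fin.succ_castSucc] using h j

section EscapePath

variable (G : SimpleGraph V) (ℓ σ : V → ℕ∞) (S : Set V)

def HasEscapePath (k : ℕ) (v : V) : Prop :=
  ∃ p : Fin (k + 1) → V, p 0 = v ∧
    (∀ i : Fin k, G.Adj (p i.castSucc) (p i.succ) ∧ p i.succ ∈ depGraph G ℓ (p i.castSucc)) ∧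
    (∀ i : Fin k, ℓ (p i.castSucc) < σ (p i.castSucc)) ∧
    p (Fin.last k) ∉ S ∧ p (Fin.last k) ∈ depGraph G ℓ v

variable {G ℓ σ S}

lemma hasEscapePath_zero {v : V} (hv : v ∉ S) (h : ℓ v ≠ ⊤) : HasEscapePath G ℓ σ S 0 v :=
  ⟨fun _ => v, rfl, finZeroElim, finZeroElim, hv, mem_depGraph_self G ℓ h⟩

lemma HasEscapePath.cons {k : ℕ} {v w : V} (hadj : G.Adj v w) (hlt : ℓ w < ℓ v)
    (hv : ℓ v < σ v) (hw : HasEscapePath G ℓ σ S k w) : HasEscapePath G ℓ σ S (k + 1) v := by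
  obtain ⟨p, rfl, hstep, hgt, hlast, hlastD⟩ := hw
  have hsub := depGraph_subset_of_adj G ℓ hadj hlt hv.ne_top
  refine ⟨Fin.cons v p, rfl,
    Fin.rel_cons_castSucc_cons_succ (R := fun a b => G.Adj a b ∧ b ∈ depGraph G ℓ a)
      ⟨hadj, hsub (mem_depGraph_self G ℓ hlt.ne_top)⟩ hstep,
    Fin.rel_cons_castSucc_cons_succ (R := fun a _ => ℓ a < σ a) hv hgt, ?_, ?_⟩
  all_goals rw [← Fin.succ_last, Fin.cons_succ]
  exacts [hlast, hsub hlastD]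

end EscapePath

theorem exists_hasEscapePath (G : SimpleGraph V) [G.LocallyFinite] (β : ℕ) {S T : Set V}
    {v : V} (hv : v ∈ S) (h : indSigma G T β v < indSigma G S β v) :
    ∃ k : ℕ, (k : ℕ∞) ≤ indSigma G T β v ∧
      HasEscapePath G (indSigma G T β) (indSigma G S β) S k v := by
  induction hℓ : indSigma G T β v using WellFoundedLT.induction generalizing v with
  | _ n ih =>
    obtain ⟨w, hadj, hlt, hw⟩ := exists_adj_indSigma_lt G β hv h
    obtain ⟨k, hk, hpath⟩ : ∃ k : ℕ, (k : ℕ∞) ≤ indSigma G T β w ∧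
        HasEscapePath G (indSigma G T β) (indSigma G S β) S k w := by
      by_cases hwS : w ∈ S
      · exact ih _ (hℓ ▸ hlt) hwS hw rfl
      · exact ⟨0, by simp, hasEscapePath_zero hwS hlt.ne_top⟩
    exact ⟨k + 1, hℓ ▸ Order.add_one_le_of_lt (hk.trans_lt hlt), hpath.cons hadj hlt h⟩

theorem coin_game_progress_general [Fintype V] (G : SimpleGraph V) (β x : ℕ)
    (Sv : Set V) (v : V) (hv : v ∈ Sv)
    (hlow : ((indSigma G Set.univ β v).toNat : ℝ) ≤ Real.log x / Real.log ((β : ℝ) + 1))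
    (hgt : indSigma G Set.univ β v < indSigma G Sv β v) :
    ∃ (k : ℕ) (p : Fin (k + 1) → V),
      p 0 = v ∧
      ((k : ℝ) ≤ Real.log x / Real.log ((β : ℝ) + 1)) ∧
      (∀ i : Fin k, G.Adj (p i.castSucc) (p i.succ) ∧
        p i.succ ∈ depGraph G (indSigma G Set.univ β) (p i.castSucc)) ∧
      (∀ i : Fin k,
        indSigma G Set.univ β (p i.castSucc) < indSigma G Sv β (p i.castSucc)) ∧
      p (Fin.last k) ∉ Sv ∧
      p (Fin.last k) ∈ depGraph G (indSigma G Set.univ β) v := by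
  obtain ⟨k, hk, p, hp₀, hstep, hgt', hlast, hlastD⟩ := exists_hasEscapePath G β hv hgt
  have hk' : k ≤ (indSigma G Set.univ β v).toNat := by
    simpa using ENat.toNat_le_toNat hk hgt.ne_top
  exact ⟨k, p, hp₀, le_trans (by exact_mod_cast hk') hlow, hstep, hgt', hlast, hlastD⟩

/-- Measure of progress in the coin dropping game: if
`|D(ℓ_β, v)| ≤ x²`, `ℓ_β(v) ≤ log_{β+1} x`, and `σ_{S_v,β}(v) > ℓ_β(v)`, then there
is a path `v = w_0, …, w_k` with `w_i ∈ D(ℓ_β, w_{i-1})`,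
`σ_{S_v,β}(w_i) > ℓ_β(w_i)` for `i < k`, `k ≤ log_{β+1} x`, and `w_k ∉ S_v`;
consequently a new node of `D(ℓ_β, v) \ S_v` is discovered. -/
theorem coin_game_progress [Fintype V] (G : SimpleGraph V) (β x : ℕ)
    (hβ : 1 ≤ β) (hx : 1 ≤ x) (Sv : Set V) (v : V) (hv : v ∈ Sv)
    (hD : ((depGraph G (indSigma G Set.univ β) v).ncard : ℝ) ≤ (x : ℝ) ^ 2)
    (hfin : indSigma G Set.univ β v ≠ ⊤)
    (hlow : ((indSigma G Set.univ β v).toNat : ℝ) ≤ Real.log x / Real.log ((β : ℝ) + 1))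
    (hgt : indSigma G Set.univ β v < indSigma G Sv β v) :
    ∃ (k : ℕ) (p : Fin (k + 1) → V),
      p 0 = v ∧
      ((k : ℝ) ≤ Real.log x / Real.log ((β : ℝ) + 1)) ∧
      (∀ i : Fin k, G.Adj (p i.castSucc) (p i.succ) ∧
        p i.succ ∈ depGraph G (indSigma G Set.univ β) (p i.castSucc)) ∧
      (∀ i : Fin k,
        indSigma G Set.univ β (p i.castSucc) < indSigma G Sv β (p i.castSucc)) ∧
      p (Fin.last k) ∉ Sv ∧
      p (Fin.last k) ∈ depGraph G (indSigma G Set.univ β) v :=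
  coin_game_progress_general G β x Sv v hv hlow hgt
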